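/- For real parameters ρ > 0 and β > ρ, Kummer's confluent hypergeometric function satisfies the asymptotic Φ(ρ, β; −x) ~ (Γ(β)/Γ(β − ρ)) · x^{−ρ} as x → +∞; that is, lim_{x→∞} x^{ρ} Φ(ρ, β; −x) = Γ(β)/Γ(β − ρ). -/

import Mathlib

/-!
Integrating the exponential series term by term against the beta weight
`t ^ (ρ - 1) * (1 - t) ^ (β - ρ - 1)`, whose moments are ratios of Pochhammer symbols, gives Euler's
representation `Φ(ρ, β; z) = Γ(β) / (Γ(ρ) Γ(β - ρ)) * ∫₀¹ e^{z t} t^{ρ-1} (1-t)^{β-ρ-1} dt`.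
For `z = -x` the asymptotics is the leading term of Watson's lemma: on `[1/2, 1)` the factor
`e^{-x t}` makes the integral `O(e^{-x/2})`, while on `(0, 1/2)` the substitution `u = x t` turns
`x^ρ` times the integral into `∫₀^{x/2} e^{-u} u^{ρ-1} (1 - u/x)^{β-ρ-1} du`, which tends to `Γ(ρ)`
by dominated convergence.
-/

open Filter

noncomputable def kummerPhi (a b z : ℝ) : ℝ :=
  ∑' n : ℕ, (ascPochhammer ℝ n).eval a / (ascPochhammer ℝ n).eval b * z^n / n.factorial

open MeasureTheory Set Real Topology

lemma Complex.ofReal_betaIntegrand {a b t : ℝ} (ht : t ∈ Icc 0 1) :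
    ((t ^ (a - 1) * (1 - t) ^ (b - 1) : ℝ) : ℂ) =
      (t : ℂ) ^ ((a : ℂ) - 1) * (1 - (t : ℂ)) ^ ((b : ℂ) - 1) := by
  rw [Complex.ofReal_mul, Complex.ofReal_cpow ht.1, Complex.ofReal_cpow (sub_nonneg.2 ht.2)]
  push_cast
  rfl

lemma integrableOn_betaIntegrand {a b : ℝ} (ha : 0 < a) (hb : 0 < b) :
    IntegrableOn (fun t : ℝ => t ^ (a - 1) * (1 - t) ^ (b - 1)) (Ioo 0 1) := by
  have h := (Complex.betaIntegral_convergent (u := a) (v := b) (by simpa) (by simpa))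
  rw [intervalIntegrable_iff_integrableOn_Ioo_of_le zero_le_one] at h
  refine IntegrableOn.congr_fun h.re (fun t ht => ?_) measurableSet_Ioo
  rw [← Complex.ofReal_betaIntegrand (Ioo_subset_Icc_self ht), RCLike.re_to_complex,
    Complex.ofReal_re]

lemma integral_betaIntegrand {a b : ℝ} (ha : 0 < a) (hb : 0 < b) :
    ∫ t in Ioo 0 1, t ^ (a - 1) * (1 - t) ^ (b - 1) = Gamma a * Gamma b / Gamma (a + b) := by
  have h := Complex.betaIntegral_eq_Gamma_mul_div (u := a) (v := b) (by simpa) (by simpa)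
  rw [Complex.betaIntegral, intervalIntegral.integral_of_le zero_le_one,
    integral_Ioc_eq_integral_Ioo, ← setIntegral_congr_fun measurableSet_Ioo
      (fun t ht => Complex.ofReal_betaIntegrand (Ioo_subset_Icc_self ht)),
    integral_complex_ofReal, ← Complex.ofReal_add, Complex.Gamma_ofReal, Complex.Gamma_ofReal,
    Complex.Gamma_ofReal] at h
  exact_mod_cast h

lemma Gamma_add_nat_eq_ascPochhammer_mul {a : ℝ} (ha : 0 < a) (n : ℕ) :
    Gamma (a + n) = (ascPochhammer ℝ n).eval a * Gamma a := by
  induction n with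
  | zero => simp
  | succ n ih =>
    rw [Nat.cast_succ, ← add_assoc, Gamma_add_one (by positivity), ih, ascPochhammer_succ_eval]
    ring

lemma integral_pow_mul_betaIntegrand {a b : ℝ} (ha : 0 < a) (hb : 0 < b) (n : ℕ) :
    ∫ t in Ioo 0 1, t ^ n * (t ^ (a - 1) * (1 - t) ^ (b - 1)) =
      (ascPochhammer ℝ n).eval a / (ascPochhammer ℝ n).eval (a + b) *
        (Gamma a * Gamma b / Gamma (a + b)) := by
  have hpow : ∀ t ∈ Ioo (0 : ℝ) 1, t ^ n * (t ^ (a - 1) * (1 - t) ^ (b - 1)) =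
      t ^ ((a + n) - 1) * (1 - t) ^ (b - 1) := fun t ht => by
    rw [show a + n - 1 = n + (a - 1) by ring, rpow_add ht.1, rpow_natCast, mul_assoc]
  rw [setIntegral_congr_fun measurableSet_Ioo hpow, integral_betaIntegrand (by positivity) hb,
    show a + n + b = a + b + n by ring, Gamma_add_nat_eq_ascPochhammer_mul ha,
    Gamma_add_nat_eq_ascPochhammer_mul (by positivity)]
  have : (ascPochhammer ℝ n).eval (a + b) ≠ 0 := (ascPochhammer_pos n _ (by positivity)).ne'
  have : Gamma (a + b) ≠ 0 := (Gamma_pos_of_pos (by positivity)).ne'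
  field_simp

lemma hasSum_integral_exp_mul {μ : Measure ℝ} {w : ℝ → ℝ} (hw : Integrable w μ)
    (hbdd : ∀ᵐ t ∂μ, |t| ≤ 1) (z : ℝ) :
    HasSum (fun n : ℕ => z ^ n / n.factorial * ∫ t, t ^ n * w t ∂μ)
      (∫ t, exp (z * t) * w t ∂μ) := by
  set F : ℕ → ℝ → ℝ := fun n t => z ^ n / n.factorial * (t ^ n * w t)
  have hF_le : ∀ n, ∀ᵐ t ∂μ, ‖F n t‖ ≤ |z| ^ n / n.factorial * ‖w t‖ := fun n => by
    filter_upwards [hbdd] with t ht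
    simp only [F, norm_mul, norm_div, norm_pow, Real.norm_eq_abs, Nat.abs_cast]
    gcongr
    exact mul_le_of_le_one_left (abs_nonneg _) (pow_le_one₀ (abs_nonneg t) ht)
  have hF_int : ∀ n, Integrable (F n) μ := fun n =>
    Integrable.mono' (hw.norm.const_mul _)
      ((((continuous_pow n).aestronglyMeasurable).mul hw.1).const_mul _) (hF_le n)
  have hF_sum : Summable fun n => ∫ t, ‖F n t‖ ∂μ := by
    refine Summable.of_nonneg_of_le (fun n => integral_nonneg fun t => norm_nonneg _)
      (fun n => (integral_mono_ae (hF_int n).norm (hw.norm.const_mul _) (hF_le n)).trans_eq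
        (integral_const_mul _ _)) ((summable_pow_div_factorial |z|).mul_right _)
  have hF_hasSum : ∀ t, HasSum (fun n => F n t) (exp (z * t) * w t) := fun t => by
    have := (NormedSpace.expSeries_div_hasSum_exp (z * t)).mul_right (w t)
    rw [← Real.exp_eq_exp_ℝ] at this
    exact this.congr_fun fun n => by ring
  have h := hasSum_integral_of_summable_integral_norm hF_int hF_sum
  rw [integral_congr_ae (ae_of_all _ fun t => (hF_hasSum t).tsum_eq)] at h
  simpa only [F, integral_const_mul] using h

theorem kummerPhi_eq_integral {a b : ℝ} (ha : 0 < a) (hab : a < b) (z : ℝ) :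
    kummerPhi a b z = Gamma b / (Gamma a * Gamma (b - a)) *
      ∫ t in Ioo 0 1, exp (z * t) * (t ^ (a - 1) * (1 - t) ^ (b - a - 1)) := by
  have hc : 0 < b - a := sub_pos.2 hab
  have hbdd : ∀ᵐ t ∂(volume.restrict (Ioo (0 : ℝ) 1)), |t| ≤ 1 :=
    ae_restrict_of_forall_mem measurableSet_Ioo fun t ht => abs_le.2 ⟨by linarith [ht.1], ht.2.le⟩
  have h := hasSum_integral_exp_mul (integrableOn_betaIntegrand ha hc) hbdd z
  simp only [integral_pow_mul_betaIntegrand ha hc, add_sub_cancel] at h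
  rw [kummerPhi, ← (h.mul_left _).tsum_eq]
  refine tsum_congr fun n => ?_
  have := (Gamma_pos_of_pos ha).ne'
  have := (Gamma_pos_of_pos hc).ne'
  have := (Gamma_pos_of_pos (ha.trans hab)).ne'
  field_simp

lemma integrableOn_exp_neg_mul_mul {f : ℝ → ℝ} {s : Set ℝ} (hs : s ⊆ Ici 0)
    (hsm : MeasurableSet s) (hf : IntegrableOn f s) {x : ℝ} (hx : 0 ≤ x) :
    IntegrableOn (fun t => exp (-x * t) * f t) s := by
  refine hf.bdd_mul (c := 1) (by fun_prop) ?_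
  filter_upwards [ae_restrict_mem hsm] with t ht
  rw [norm_of_nonneg (exp_pos _).le, exp_le_one_iff]
  nlinarith [mul_nonneg hx (hs ht : 0 ≤ t)]

lemma tendsto_rpow_mul_integral_exp_neg_mul_of_subset_Ici {f : ℝ → ℝ} {s : Set ℝ} {a : ℝ}
    (ha : 0 < a) (hs : s ⊆ Ici a) (hsm : MeasurableSet s) (hf : IntegrableOn f s) (ρ : ℝ) :
    Tendsto (fun x => x ^ ρ * ∫ t in s, exp (-x * t) * f t) atTop (𝓝 0) := by
  have hbound : ∀ x, 0 ≤ x →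
      ‖∫ t in s, exp (-x * t) * f t‖ ≤ exp (-a * x) * ∫ t in s, ‖f t‖ := fun x hx => by
    rw [← integral_const_mul]
    refine norm_integral_le_of_norm_le (hf.norm.const_mul _) ?_
    filter_upwards [ae_restrict_mem hsm] with t ht
    rw [norm_mul, norm_of_nonneg (exp_pos _).le]
    exact mul_le_mul_of_nonneg_right
      (exp_le_exp.2 (by nlinarith [mul_le_mul_of_nonneg_left (hs ht : a ≤ t) hx])) (norm_nonneg _)
  have hlim := (tendsto_rpow_mul_exp_neg_mul_atTop_nhds_zero ρ a ha).mul_const (∫ t in s, ‖f t‖)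
  rw [zero_mul] at hlim
  refine squeeze_zero_norm' ?_ hlim
  filter_upwards [eventually_ge_atTop 0] with x hx
  rw [norm_mul, norm_of_nonneg (rpow_nonneg hx ρ), mul_assoc]
  exact mul_le_mul_of_nonneg_left (hbound x hx) (rpow_nonneg hx ρ)

lemma rpow_mul_integral_exp_neg_mul_eq {ρ δ x : ℝ} (hδ : 0 ≤ δ) (hx : 0 < x) (g : ℝ → ℝ) :
    x ^ ρ * ∫ t in Ioo 0 δ, exp (-x * t) * (t ^ (ρ - 1) * g t) =
      ∫ u in Ioo 0 (x * δ), exp (-u) * (u ^ (ρ - 1) * g (u / x)) := by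
  set H : ℝ → ℝ := fun u => exp (-u) * (u ^ (ρ - 1) * g (u / x))
  have hH : ∀ t ∈ Ioo 0 δ, H (x * t) = x ^ (ρ - 1) * (exp (-x * t) * (t ^ (ρ - 1) * g t)) :=
    fun t ht => by
      simp only [H, mul_rpow hx.le ht.1.le, mul_div_cancel_left₀ _ hx.ne', neg_mul]
      ring
  have hIoo : ∀ {b : ℝ} (F : ℝ → ℝ), 0 ≤ b → ∫ t in Ioo 0 b, F t = ∫ t in 0..b, F t :=
    fun F hb => (integral_Ioc_eq_integral_Ioo.symm.trans (intervalIntegral.integral_of_le hb).symm)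
  calc x ^ ρ * ∫ t in Ioo 0 δ, exp (-x * t) * (t ^ (ρ - 1) * g t)
      = x * ∫ t in Ioo 0 δ, H (x * t) := by
        rw [setIntegral_congr_fun measurableSet_Ioo hH, integral_const_mul, ← mul_assoc,
          rpow_sub_one hx.ne', mul_div_cancel₀ _ hx.ne']
    _ = ∫ u in Ioo 0 (x * δ), H u := by
        rw [hIoo _ hδ, hIoo _ (by positivity), intervalIntegral.integral_comp_mul_left H hx.ne',
          mul_zero, smul_eq_mul, mul_inv_cancel_left₀ hx.ne']

lemma tendsto_integral_exp_neg_mul_rpow_mul_comp_div {ρ δ : ℝ} (hρ : 0 < ρ) (hδ : 0 < δ)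
    {g : ℝ → ℝ} (hg : ContinuousOn g (Icc 0 δ)) :
    Tendsto (fun x => ∫ u in Ioo 0 (x * δ), exp (-u) * (u ^ (ρ - 1) * g (u / x))) atTop
      (𝓝 (Gamma ρ * g 0)) := by
  obtain ⟨M, hM⟩ := isCompact_Icc.exists_bound_of_continuousOn hg
  have hM0 : 0 ≤ M := (norm_nonneg _).trans (hM 0 ⟨le_rfl, hδ.le⟩)
  set ν := volume.restrict (Ioi (0 : ℝ))
  set F : ℝ → ℝ → ℝ := fun x =>
    (Ioo 0 (x * δ)).indicator fun u => exp (-u) * (u ^ (ρ - 1) * g (u / x))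
  have hF : ∀ x, ∫ u in Ioo 0 (x * δ), exp (-u) * (u ^ (ρ - 1) * g (u / x)) = ∫ u, F x u ∂ν :=
    fun x => by
      rw [integral_indicator measurableSet_Ioo, Measure.restrict_restrict measurableSet_Ioo,
        inter_eq_left.2 Ioo_subset_Ioi_self]
  have hmaps : ∀ x > 0, MapsTo (· / x) (Ioo 0 (x * δ)) (Icc 0 δ) := fun x hx u hu =>
    ⟨div_nonneg hu.1.le hx.le, (div_le_iff₀' hx).2 hu.2.le⟩
  have hF_meas : ∀ᶠ x in atTop, AEStronglyMeasurable (F x) ν := by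
    filter_upwards [eventually_gt_atTop 0] with x hx
    refine (aestronglyMeasurable_indicator_iff measurableSet_Ioo).2 ?_
    refine ContinuousOn.aestronglyMeasurable ?_ measurableSet_Ioo |>.mono_measure
      (Measure.restrict_mono subset_rfl Measure.restrict_le_self)
    refine (continuous_exp.comp continuous_neg).continuousOn.mul
      ((continuousOn_id.rpow_const fun u hu => Or.inl hu.1.ne').mul
        (hg.comp (continuousOn_id.div_const x) (hmaps x hx)))
  have hF_le : ∀ᶠ x in atTop, ∀ᵐ u ∂ν, ‖F x u‖ ≤ M * (exp (-u) * u ^ (ρ - 1)) := by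
    filter_upwards [eventually_gt_atTop 0] with x hx
    filter_upwards [ae_restrict_mem measurableSet_Ioi] with u hu
    rw [norm_indicator_eq_indicator_norm]
    have hbound_nonneg : 0 ≤ exp (-u) * u ^ (ρ - 1) := by
      have := rpow_nonneg hu.le (ρ - 1)
      positivity
    refine indicator_apply_le' (fun hu' => ?_) (fun _ => mul_nonneg hM0 hbound_nonneg)
    rw [norm_mul, norm_mul, norm_of_nonneg (exp_pos _).le, norm_of_nonneg (rpow_nonneg hu.le _),
      ← mul_assoc, mul_comm M]
    exact mul_le_mul_of_nonneg_left (hM _ (hmaps x hx hu')) hbound_nonneg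
  have hF_lim : ∀ᵐ u ∂ν, Tendsto (F · u) atTop (𝓝 (exp (-u) * u ^ (ρ - 1) * g 0)) := by
    filter_upwards [ae_restrict_mem measurableSet_Ioi] with u hu
    have hdiv : Tendsto (fun x => u / x) atTop (𝓝[Icc 0 δ] 0) := by
      refine tendsto_nhdsWithin_of_tendsto_nhds_of_eventually_within _
        (tendsto_const_nhds.div_atTop tendsto_id) ?_
      filter_upwards [eventually_gt_atTop (u / δ)] with x hx
      exact hmaps x ((div_pos hu hδ).trans hx) ⟨hu, (div_lt_iff₀ hδ).1 hx⟩
    rw [mul_assoc]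
    refine ((((hg 0 (left_mem_Icc.2 hδ.le)).tendsto.comp hdiv).const_mul _).const_mul _).congr' ?_
    filter_upwards [eventually_gt_atTop (u / δ)] with x hx
    simp only [F, Function.comp_apply,
      indicator_of_mem (show u ∈ Ioo 0 (x * δ) from ⟨hu, (div_lt_iff₀ hδ).1 hx⟩)]
  have hlim := tendsto_integral_filter_of_dominated_convergence _ hF_meas hF_le
    ((GammaIntegral_convergent hρ).const_mul M) hF_lim
  rw [Gamma_eq_integral hρ, ← integral_mul_const]
  exact hlim.congr fun x => (hF x).symm

theorem tendsto_rpow_mul_integral_exp_neg_mul_rpow_mul {ρ : ℝ} (hρ : 0 < ρ) {g : ℝ → ℝ}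
    (hg : ContinuousOn g (Ico 0 1)) (hint : IntegrableOn (fun t => t ^ (ρ - 1) * g t) (Ioo 0 1)) :
    Tendsto (fun x => x ^ ρ * ∫ t in Ioo 0 1, exp (-x * t) * (t ^ (ρ - 1) * g t)) atTop
      (𝓝 (Gamma ρ * g 0)) := by
  have hhead := (tendsto_integral_exp_neg_mul_rpow_mul_comp_div hρ one_half_pos
    (hg.mono (Icc_subset_Ico_right one_half_lt_one))).congr' <|
      (eventually_gt_atTop 0).mono fun x hx =>
        (rpow_mul_integral_exp_neg_mul_eq one_half_pos.le hx g).symm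
  have htail := tendsto_rpow_mul_integral_exp_neg_mul_of_subset_Ici one_half_pos
    (fun t ht => ht.1) measurableSet_Ico (hint.mono_set (Ico_subset_Ioo_left one_half_pos)) ρ
  rw [← add_zero (Gamma ρ * g 0)]
  refine (hhead.add htail).congr' ?_
  filter_upwards [eventually_ge_atTop 0] with x hx
  have hx_int := integrableOn_exp_neg_mul_mul (fun t ht => ht.1.le) measurableSet_Ioo hint hx
  have hdisj : Disjoint (Ioo (0 : ℝ) (1 / 2)) (Ico (1 / 2) 1) :=
    disjoint_left.2 fun t h₁ h₂ => h₁.2.not_ge h₂.1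
  rw [← mul_add, ← setIntegral_union hdisj measurableSet_Ico
      (hx_int.mono_set (Ioo_subset_Ioo_right one_half_lt_one.le))
      (hx_int.mono_set (Ico_subset_Ioo_left one_half_pos)),
    Ioo_union_Ico_eq_Ioo one_half_pos one_half_lt_one.le]

theorem kummer_asymptotics (ρ β : ℝ) (hρ : 0 < ρ) (hβ : ρ < β) :
    Tendsto (fun x : ℝ => x^ρ * kummerPhi ρ β (-x)) atTop
      (nhds (Real.Gamma β / Real.Gamma (β - ρ))) := by
  have hc : 0 < β - ρ := sub_pos.2 hβ
  have hg : ContinuousOn (fun t : ℝ => (1 - t) ^ (β - ρ - 1)) (Ico 0 1) :=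
    (continuousOn_const.sub continuousOn_id).rpow_const fun t ht => Or.inl (sub_pos.2 ht.2).ne'
  have hlim := (tendsto_rpow_mul_integral_exp_neg_mul_rpow_mul hρ hg
    (integrableOn_betaIntegrand hρ hc)).const_mul (Gamma β / (Gamma ρ * Gamma (β - ρ)))
  have hΓρ := (Gamma_pos_of_pos hρ).ne'
  convert hlim using 2 with x
  · rw [kummerPhi_eq_integral hρ hβ]
    ring
  · field_simp
    simp
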